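/- Let R be an m×n 0-1 matrix such that every row ℓ whose support L_ℓ has size 2 corresponds to an edge of at most one 0-strong odd cycle, the 0-strong odd cycles are pairwise label-disjoint, and suppose x_disc∈{−1,+1}ⁿ satisfies: |[R x_disc]_ℓ| ≤ 1 for every label ℓ not removed in breaking the 0-strong odd cycles, and |[R x_disc]_ℓ| = 2 for exactly one weak label per 0-strong odd cycle. Then ‖R x_disc‖² ≤ ‖R x‖² for all x∈{−1,+1}ⁿ, i.e., x_disc attains the maximum cut of the weighted intersection graph of R. -/

import Mathlib

/-!
For a sign vector `x`, `[R x]_ℓ` is a sum of `|L_ℓ|` signs, so `[R x]_ℓ² ≥ |L_ℓ| mod 2`.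
Since a 0-strong cycle is odd, `x` makes one of its edges monochromatic, and that weak label
contributes `4` instead of `0`. The cycles are label-disjoint, so
`‖R x‖² ≥ 4 t + ∑_ℓ (|L_ℓ| mod 2)`, and the hypotheses on `x_disc` say that it attains this bound.
The cut inequality then follows from `‖R x‖² = ∑_{i,j} (RᵀR)_{ij} - 4 cut(x)`.
-/

open Finset Matrix

lemma Int.emod_two_le_sq (z : ℤ) : z % 2 ≤ z ^ 2 := by
  rcases eq_or_ne z 0 with rfl | hz
  · simp
  · have : 1 ≤ z ^ 2 := (one_le_sq_iff_one_le_abs z).mpr (Int.one_le_abs hz)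
    omega

lemma Int.sq_eq_emod_two_of_abs_le_one {z : ℤ} (hz : |z| ≤ 1) : z ^ 2 = z % 2 := by
  obtain ⟨h₁, h₂⟩ := abs_le.mp hz
  interval_cases z <;> rfl

section SignSums

variable {ι : Type*} {x : ι → ℝ}

lemma sum_eq_card_sub_two_mul_card_filter (hx : ∀ i, x i = 1 ∨ x i = -1)
    (s : Finset ι) : ∑ v ∈ s, x v = #s - 2 * #{v ∈ s | x v = -1} := by
  have hxv : ∀ v, x v = 1 - 2 * (if x v = -1 then 1 else 0) := fun v => by
    rcases hx v with h | h <;> norm_num [h]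
  rw [sum_congr rfl fun v _ => hxv v]
  simp [sum_sub_distrib, sum_ite, mul_comm]

lemma card_mod_two_le_sq_sum (hx : ∀ i, x i = 1 ∨ x i = -1) (s : Finset ι) :
    ((#s % 2 : ℕ) : ℝ) ≤ (∑ v ∈ s, x v) ^ 2 := by
  rw [sum_eq_card_sub_two_mul_card_filter hx]
  generalize #s = a, #{v ∈ s | x v = -1} = b
  have : ((a % 2 : ℕ) : ℤ) ≤ ((a : ℤ) - 2 * b) ^ 2 :=
    le_trans (by omega) (Int.emod_two_le_sq _)
  have h := (Int.cast_le (R := ℝ)).mpr this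
  push_cast at h
  exact h

lemma sq_sum_eq_card_mod_two (hx : ∀ i, x i = 1 ∨ x i = -1) {s : Finset ι}
    (hs : |∑ v ∈ s, x v| ≤ 1) : (∑ v ∈ s, x v) ^ 2 = ((#s % 2 : ℕ) : ℝ) := by
  rw [sum_eq_card_sub_two_mul_card_filter hx] at hs ⊢
  generalize #s = a, #{v ∈ s | x v = -1} = b at hs ⊢
  have : ((a : ℤ) - 2 * b) ^ 2 = ((a % 2 : ℕ) : ℤ) :=
    (Int.sq_eq_emod_two_of_abs_le_one (by exact_mod_cast hs)).trans (by omega)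
  have h := congrArg (Int.cast : ℤ → ℝ) this
  push_cast at h
  exact h

end SignSums

lemma finRotate_apply_ne {k : ℕ} (hk : 2 ≤ k) (i : Fin k) : finRotate k i ≠ i :=
  Equiv.Perm.mem_support.mp (support_finRotate_of_le hk ▸ mem_univ i)

lemma exists_apply_finRotate_eq_of_odd {k : ℕ} (hk : Odd k) {y : Fin k → ℝ}
    (hy : ∀ i, y i = 1 ∨ y i = -1) : ∃ i, y (finRotate k i) = y i := by
  by_contra! hne
  have hflip : ∀ i, y (finRotate k i) = -y i := fun i => by
    have := hne i
    rcases hy i with h | h <;> rcases hy (finRotate k i) with h' | h' <;> simp_all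
  have hprod : ∏ i, y i = -∏ i, y i := by
    calc ∏ i, y i = ∏ i, y (finRotate k i) := (Equiv.prod_comp (finRotate k) y).symm
      _ = -∏ i, y i := by
          simp only [hflip, prod_neg, card_univ, Fintype.card_fin, hk.neg_one_pow, neg_one_mul]
  have hne0 : ∏ i, y i ≠ 0 := prod_ne_zero_iff.mpr fun i _ => by
    rcases hy i with h | h <;> norm_num [h]
  exact hne0 (by linarith)

lemma sum_sq_mulVec_eq {κ ι R : Type*} [Fintype κ] [Fintype ι] [CommSemiring R]
    (A : Matrix κ ι R) (x : ι → R) :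
    ∑ ℓ, (A *ᵥ x) ℓ ^ 2 = ∑ i, ∑ j, (Aᵀ * A) i j * (x i * x j) := by
  simp only [sq, mulVec, dotProduct, mul_apply, transpose_apply, sum_mul, mul_sum]
  rw [sum_comm]
  refine sum_congr rfl fun i _ => ?_
  rw [sum_comm]
  exact sum_congr rfl fun j _ => sum_congr rfl fun ℓ _ => by ring

lemma sum_sum_eq_two_nsmul_sum_sum_lt {ι M : Type*} [Fintype ι] [LinearOrder ι]
    [AddCommMonoid M] {f : ι → ι → M} (hsymm : ∀ i j, f i j = f j i) (hdiag : ∀ i, f i i = 0) :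
    ∑ i, ∑ j, f i j = 2 • ∑ i, ∑ j, if i < j then f i j else 0 := by
  have hsplit : ∀ i j, f i j = (if i < j then f i j else 0) + (if j < i then f j i else 0) :=
    fun i j => by
      rcases lt_trichotomy i j with h | rfl | h
      · simp [h, h.not_gt]
      · simp [hdiag]
      · simp [h, h.not_gt, hsymm i j]
  rw [sum_congr rfl fun i _ => sum_congr rfl fun j _ => hsplit i j]
  simp only [sum_add_distrib]
  rw [sum_comm (f := fun i j => if j < i then f j i else 0), two_nsmul]

lemma mul_eq_one_sub_two_mul_ite_ne {a b : ℝ} (ha : a = 1 ∨ a = -1) (hb : b = 1 ∨ b = -1) :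
    a * b = 1 - 2 * if a ≠ b then 1 else 0 := by
  rcases ha with rfl | rfl <;> rcases hb with rfl | rfl <;> norm_num

lemma sum_sq_mulVec_eq_sub_four_mul_cut {κ ι : Type*} [Fintype κ] [Fintype ι] [LinearOrder ι]
    (A : Matrix κ ι ℝ) {x : ι → ℝ} (hx : ∀ i, x i = 1 ∨ x i = -1) :
    ∑ ℓ, (A *ᵥ x) ℓ ^ 2 = ∑ i, ∑ j, (Aᵀ * A) i j
      - 4 * ∑ i, ∑ j, if i < j ∧ x i ≠ x j then (Aᵀ * A) i j else 0 := by
  have hcut := sum_sum_eq_two_nsmul_sum_sum_lt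
    (f := fun i j => if x i ≠ x j then (Aᵀ * A) i j else 0)
    (fun i j => by simp only [mul_apply, transpose_apply, mul_comm, ne_comm])
    (fun i => if_neg (not_not.mpr rfl))
  simp only [ite_and]
  calc ∑ ℓ, (A *ᵥ x) ℓ ^ 2
      = ∑ i, ∑ j, ((Aᵀ * A) i j - 2 * if x i ≠ x j then (Aᵀ * A) i j else 0) := by
        rw [sum_sq_mulVec_eq]
        refine sum_congr rfl fun i _ => sum_congr rfl fun j _ => ?_
        rw [mul_eq_one_sub_two_mul_ite_ne (hx i) (hx j)]
        split_ifs <;> ring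
    _ = _ := by
        simp only [sum_sub_distrib, ← mul_sum]
        rw [hcut, two_nsmul]
        ring

section ZeroOneMatrix

variable {κ ι : Type*} [Fintype ι] {A : Matrix κ ι ℝ}

lemma mulVec_apply_eq_sum_filter (hA : ∀ ℓ v, A ℓ v = 0 ∨ A ℓ v = 1) (x : ι → ℝ) (ℓ : κ) :
    (A *ᵥ x) ℓ = ∑ v ∈ univ.filter (fun v => A ℓ v = 1), x v := by
  rw [sum_filter, mulVec, dotProduct]
  exact sum_congr rfl fun v _ => by rcases hA ℓ v with h | h <;> simp [h]

lemma card_mod_two_le_sq_mulVec (hA : ∀ ℓ v, A ℓ v = 0 ∨ A ℓ v = 1) {x : ι → ℝ}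
    (hx : ∀ i, x i = 1 ∨ x i = -1) (ℓ : κ) :
    ((#{v | A ℓ v = 1} % 2 : ℕ) : ℝ) ≤ (A *ᵥ x) ℓ ^ 2 := by
  rw [mulVec_apply_eq_sum_filter hA]
  exact card_mod_two_le_sq_sum hx _

lemma sq_mulVec_eq_card_mod_two (hA : ∀ ℓ v, A ℓ v = 0 ∨ A ℓ v = 1) {x : ι → ℝ}
    (hx : ∀ i, x i = 1 ∨ x i = -1) {ℓ : κ} (hℓ : |(A *ᵥ x) ℓ| ≤ 1) :
    (A *ᵥ x) ℓ ^ 2 = ((#{v | A ℓ v = 1} % 2 : ℕ) : ℝ) := by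
  rw [mulVec_apply_eq_sum_filter hA] at hℓ ⊢
  exact sq_sum_eq_card_mod_two hx hℓ

end ZeroOneMatrix

section Split

variable {κ τ M : Type*} [Fintype κ] [Fintype τ] [AddCommMonoid M] {σ : τ → κ}

lemma sum_eq_sum_comp_add_sum_compl [DecidableEq κ] (hσ : Function.Injective σ) (f : κ → M) :
    ∑ ℓ, f ℓ = ∑ c, f (σ c) + ∑ ℓ ∈ (univ.map ⟨σ, hσ⟩)ᶜ, f ℓ := by
  rw [← sum_add_sum_compl (univ.map ⟨σ, hσ⟩), sum_map]
  rfl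

variable [PartialOrder M] [IsOrderedAddMonoid M] {f g : κ → M}

lemma sum_le_sum_comp_add_sum (hσ : Function.Injective σ) (hg : ∀ ℓ, 0 ≤ g ℓ)
    (hfg : ∀ ℓ, (∀ c, ℓ ≠ σ c) → f ℓ ≤ g ℓ) :
    ∑ ℓ, f ℓ ≤ ∑ c, f (σ c) + ∑ ℓ, g ℓ := by
  classical
  rw [sum_eq_sum_comp_add_sum_compl hσ f]
  gcongr
  calc ∑ ℓ ∈ (univ.map ⟨σ, hσ⟩)ᶜ, f ℓ ≤ ∑ ℓ ∈ (univ.map ⟨σ, hσ⟩)ᶜ, g ℓ :=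
        sum_le_sum fun ℓ hℓ => hfg ℓ fun c hc => by simp [hc] at hℓ
    _ ≤ ∑ ℓ, g ℓ := sum_le_sum_of_subset_of_nonneg (subset_univ _) fun ℓ _ _ => hg ℓ

lemma sum_comp_add_sum_le_sum (hσ : Function.Injective σ) (hgf : ∀ ℓ, g ℓ ≤ f ℓ)
    (hgσ : ∀ c, g (σ c) = 0) :
    ∑ c, f (σ c) + ∑ ℓ, g ℓ ≤ ∑ ℓ, f ℓ := by
  classical
  rw [sum_eq_sum_comp_add_sum_compl hσ f, sum_eq_sum_comp_add_sum_compl hσ g]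
  simp only [hgσ, sum_const_zero, zero_add]
  gcongr with ℓ
  exact hgf ℓ

end Split

theorem stmt19_general (m n t : ℕ)
    (R : Matrix (Fin m) (Fin n) ℝ) (hR : ∀ ℓ v, R ℓ v = 0 ∨ R ℓ v = 1)
    (k : Fin t → ℕ) (hk : ∀ c, Odd (k c) ∧ 3 ≤ k c)
    (vc : (c : Fin t) → Fin (k c) → Fin n)
    (lc : (c : Fin t) → Fin (k c) → Fin m)
    (hvinj : ∀ c, Function.Injective (vc c))
    (hweak : ∀ c i, Finset.univ.filter (fun v => R (lc c i) v = 1)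
        = {vc c i, vc c (finRotate (k c) i)})
    (hldisj : ∀ (c c' : Fin t) (i : Fin (k c)) (i' : Fin (k c')),
        lc c i = lc c' i' → c = c')
    (e : (c : Fin t) → Fin (k c))
    (xd : Fin n → ℝ) (hxd : ∀ i, xd i = 1 ∨ xd i = -1)
    (h1 : ∀ ℓ : Fin m, (∀ c, ℓ ≠ lc c (e c)) → |R.mulVec xd ℓ| ≤ 1)
    (h2 : ∀ c, |R.mulVec xd (lc c (e c))| = 2) :
    ∀ x : Fin n → ℝ, (∀ i, x i = 1 ∨ x i = -1) →
      (∑ ℓ, (R.mulVec xd ℓ) ^ 2 ≤ ∑ ℓ, (R.mulVec x ℓ) ^ 2) ∧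
      (∑ i, ∑ j, (if i < j ∧ x i ≠ x j then (Rᵀ * R) i j else 0))
        ≤ ∑ i, ∑ j, (if i < j ∧ xd i ≠ xd j then (Rᵀ * R) i j else 0) := by
  intro x hx
  set w : Fin m → ℝ := fun ℓ => ((#{v | R ℓ v = 1} % 2 : ℕ) : ℝ)
  have hedge : ∀ c i, vc c i ≠ vc c (finRotate (k c) i) := fun c i h =>
    finRotate_apply_ne (by linarith [(hk c).2]) i (hvinj c h).symm
  have hw_weak : ∀ c i, w (lc c i) = 0 := fun c i => by
    simp only [w, hweak c i, card_pair (hedge c i)]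
    norm_num
  have hlabel_inj : ∀ s : (c : Fin t) → Fin (k c), Function.Injective fun c => lc c (s c) :=
    fun s c c' h => hldisj c c' _ _ h
  obtain ⟨f, hf⟩ : ∃ f : (c : Fin t) → Fin (k c), ∀ c,
      x (vc c (finRotate (k c) (f c))) = x (vc c (f c)) :=
    ⟨_, fun c => (exists_apply_finRotate_eq_of_odd (hk c).1 fun i => hx (vc c i)).choose_spec⟩
  have hxd_four : ∀ c, (R *ᵥ xd) (lc c (e c)) ^ 2 = 4 := fun c => by
    rw [← sq_abs, h2]
    norm_num
  have hx_four : ∀ c, (R *ᵥ x) (lc c (f c)) ^ 2 = 4 := fun c => by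
    rw [mulVec_apply_eq_sum_filter hR, hweak, sum_pair (hedge c (f c)), hf c]
    rcases hx (vc c (f c)) with h | h <;> norm_num [h]
  have hxd_le : ∑ ℓ, (R *ᵥ xd) ℓ ^ 2 ≤ ∑ _c : Fin t, 4 + ∑ ℓ, w ℓ := by
    simpa only [hxd_four] using sum_le_sum_comp_add_sum (hlabel_inj e)
      (fun ℓ => by positivity) fun ℓ hℓ => (sq_mulVec_eq_card_mod_two hR hxd (h1 ℓ hℓ)).le
  have hx_ge : ∑ _c : Fin t, 4 + ∑ ℓ, w ℓ ≤ ∑ ℓ, (R *ᵥ x) ℓ ^ 2 := by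
    simpa only [hx_four] using sum_comp_add_sum_le_sum (hlabel_inj f)
      (card_mod_two_le_sq_mulVec hR hx) fun c => hw_weak c (f c)
  refine ⟨hxd_le.trans hx_ge, ?_⟩
  linarith [sum_sq_mulVec_eq_sub_four_mul_cut R hx, sum_sq_mulVec_eq_sub_four_mul_cut R hxd]

/-- Let `R` be a 0-1 matrix whose 0-strong odd cycles (odd cycles all of
whose edges come from weak labels, the label set `L ℓ` being exactly the two
endpoints) are pairwise label-disjoint. Suppose the sign vector `xd` satisfies
`|[R xd]_ℓ| ≤ 1` for every label `ℓ` other than the removed labels, and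
`|[R xd]_ℓ| = 2` for exactly one weak label `lc c (e c)` per 0-strong odd cycle `c`.
Then `‖R xd‖² ≤ ‖R x‖²` for all `x ∈ {−1,+1}ⁿ`, i.e. `xd` attains the maximum cut of
the weighted intersection graph of `R`. -/
theorem stmt19 (m n t : ℕ)
    (R : Matrix (Fin m) (Fin n) ℝ) (hR : ∀ ℓ v, R ℓ v = 0 ∨ R ℓ v = 1)
    (k : Fin t → ℕ) (hk : ∀ c, Odd (k c) ∧ 3 ≤ k c)
    (vc : (c : Fin t) → Fin (k c) → Fin n)
    (lc : (c : Fin t) → Fin (k c) → Fin m)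
    (hvinj : ∀ c, Function.Injective (vc c))
    (hlinj : ∀ c, Function.Injective (lc c))
    (hweak : ∀ c i, Finset.univ.filter (fun v => R (lc c i) v = 1)
        = {vc c i, vc c (finRotate (k c) i)})
    (hldisj : ∀ (c c' : Fin t) (i : Fin (k c)) (i' : Fin (k c')),
        lc c i = lc c' i' → c = c')
    (e : (c : Fin t) → Fin (k c))
    (xd : Fin n → ℝ) (hxd : ∀ i, xd i = 1 ∨ xd i = -1)
    (h1 : ∀ ℓ : Fin m, (∀ c, ℓ ≠ lc c (e c)) → |R.mulVec xd ℓ| ≤ 1)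
    (h2 : ∀ c, |R.mulVec xd (lc c (e c))| = 2) :
    ∀ x : Fin n → ℝ, (∀ i, x i = 1 ∨ x i = -1) →
      (∑ ℓ, (R.mulVec xd ℓ) ^ 2 ≤ ∑ ℓ, (R.mulVec x ℓ) ^ 2) ∧
      (∑ i, ∑ j, (if i < j ∧ x i ≠ x j then (Rᵀ * R) i j else 0))
        ≤ ∑ i, ∑ j, (if i < j ∧ xd i ≠ xd j then (Rᵀ * R) i j else 0) :=
  stmt19_general m n t R hR k hk vc lc hvinj hweak hldisj e xd hxd h1 h2
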